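/- In a Boolean inverse semigroup, a proper filter is prime if and only if it is an ultrafilter. -/
import Mathlib


/-- An inverse semigroup. -/
class InverseSemigroup (S : Type*) extends Semigroup S where
  sinv : S → S
  mul_sinv_mul : ∀ a : S, a * sinv a * a = a
  sinv_mul_sinv : ∀ a : S, sinv a * a * sinv a = sinv a
  idem_comm : ∀ e f : S, e * e = e → f * f = f → e * f = f * e

namespace InverseSemigroup

variable {S : Type*} [InverseSemigroup S]

/-- The natural partial order: `a ≤ b` iff `a = e * b` for some idempotent `e`. -/
def nle (a b : S) : Prop := ∃ e : S, e * e = e ∧ a = e * b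

/-- Two elements are compatible if `a⁻¹b` and `ab⁻¹` are idempotents. -/
def compat (a b : S) : Prop :=
  (sinv a * b) * (sinv a * b) = sinv a * b ∧ (a * sinv b) * (a * sinv b) = a * sinv b

end InverseSemigroup

open InverseSemigroup

/-- A distributive inverse semigroup: an inverse semigroup with zero having joins of
compatible pairs, over which multiplication distributes. -/
class DistributiveInverseSemigroup (S : Type*) extends InverseSemigroup S where
  zero : S
  zero_mul : ∀ a : S, zero * a = zero
  mul_zero : ∀ a : S, a * zero = zero
  join : S → S → S
  le_join_left : ∀ a b : S, compat a b → nle a (join a b)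
  le_join_right : ∀ a b : S, compat a b → nle b (join a b)
  join_le : ∀ a b c : S, compat a b → nle a c → nle b c → nle (join a b) c
  mul_join : ∀ a b c : S, compat a b → c * join a b = join (c * a) (c * b)
  join_mul : ∀ a b c : S, compat a b → join a b * c = join (a * c) (b * c)

namespace DistributiveInverseSemigroup

variable {S : Type*} [DistributiveInverseSemigroup S]

/-- A filter: nonempty, downward directed and upward closed. -/
def IsFilter (A : Set S) : Prop :=
  A.Nonempty ∧ (∀ x ∈ A, ∀ y ∈ A, ∃ z ∈ A, nle z x ∧ nle z y) ∧
    (∀ x ∈ A, ∀ y : S, nle x y → y ∈ A)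

/-- Proper filter: does not contain the zero. -/
def IsProperFilter (A : Set S) : Prop := IsFilter A ∧ zero ∉ A

/-- Prime filter: proper, and a compatible join lies in it only if one of the
joinands does. -/
def IsPrimeFilter (A : Set S) : Prop :=
  IsProperFilter A ∧ ∀ a b : S, compat a b → join a b ∈ A → a ∈ A ∨ b ∈ A

/-- Ultrafilter: maximal proper filter. -/
def IsUltraFilter (A : Set S) : Prop :=
  IsProperFilter A ∧ ∀ B : Set S, IsProperFilter B → A ⊆ B → A = B

/-- `d(A) = (A⁻¹A)↑`. -/
def dOf (A : Set S) : Set S := {t | ∃ x ∈ A, ∃ u ∈ A, nle (sinv x * u) t}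

end DistributiveInverseSemigroup

open DistributiveInverseSemigroup

/-- A Boolean inverse semigroup: a distributive inverse semigroup whose semilattice of
idempotents is a generalized Boolean algebra, witnessed by a relative complement
operation on idempotents. -/
class BooleanInverseSemigroup (S : Type*) extends DistributiveInverseSemigroup S where
  rdiff : S → S → S
  rdiff_idem : ∀ e f : S, e * e = e → f * f = f → rdiff e f * rdiff e f = rdiff e f
  rdiff_le : ∀ e f : S, e * e = e → f * f = f → nle (rdiff e f) e
  rdiff_disj : ∀ e f : S, e * e = e → f * f = f → f * rdiff e f = zero
  rdiff_join : ∀ e f : S, e * e = e → f * f = f → join (e * f) (rdiff e f) = e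


open BooleanInverseSemigroup

section AuxInv

variable {S : Type*} [InverseSemigroup S]

private lemma msm (a : S) : a * sinv a * a = a := InverseSemigroup.mul_sinv_mul a
private lemma sms (a : S) : sinv a * a * sinv a = sinv a := InverseSemigroup.sinv_mul_sinv a
private lemma icomm (e f : S) (he : e * e = e) (hf : f * f = f) : e * f = f * e :=
  InverseSemigroup.idem_comm e f he hf

private lemma sm_idem (a : S) : (sinv a * a) * (sinv a * a) = sinv a * a := by
  calc (sinv a * a) * (sinv a * a) = sinv a * (a * sinv a * a) := by simp only [mul_assoc]
  _ = sinv a * a := by rw [msm]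

private lemma ms_idem (a : S) : (a * sinv a) * (a * sinv a) = a * sinv a := by
  calc (a * sinv a) * (a * sinv a) = (a * sinv a * a) * sinv a := by simp only [mul_assoc]
  _ = a * sinv a := by rw [msm]

private lemma idem_mul_idem {e f : S} (he : e * e = e) (hf : f * f = f) :
    (e * f) * (e * f) = e * f := by
  calc (e * f) * (e * f) = e * ((f * e) * f) := by simp only [mul_assoc]
  _ = e * ((e * f) * f) := by rw [icomm f e hf he]
  _ = (e * e) * (f * f) := by simp only [mul_assoc]
  _ = e * f := by rw [he, hf]

private lemma sinv_unique {a x y : S} (hx1 : a * x * a = a) (hx2 : x * a * x = x)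
    (hy1 : a * y * a = a) (hy2 : y * a * y = y) : x = y := by
  have hax : (a * x) * (a * x) = a * x := by
    calc (a * x) * (a * x) = (a * x * a) * x := by simp only [mul_assoc]
    _ = a * x := by rw [hx1]
  have hay : (a * y) * (a * y) = a * y := by
    calc (a * y) * (a * y) = (a * y * a) * y := by simp only [mul_assoc]
    _ = a * y := by rw [hy1]
  have hxa : (x * a) * (x * a) = x * a := by
    calc (x * a) * (x * a) = x * (a * x * a) := by simp only [mul_assoc]
    _ = x * a := by rw [hx1]
  have hya : (y * a) * (y * a) = y * a := by
    calc (y * a) * (y * a) = y * (a * y * a) := by simp only [mul_assoc]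
    _ = y * a := by rw [hy1]
  have key1 : x = y * (a * x) := by
    calc x = x * a * x := hx2.symm
    _ = x * (a * y * a) * x := by conv_lhs => rw [← hy1]
    _ = ((x * a) * (y * a)) * x := by simp only [mul_assoc]
    _ = ((y * a) * (x * a)) * x := by rw [icomm (x * a) (y * a) hxa hya]
    _ = (y * (a * x * a)) * x := by simp only [mul_assoc]
    _ = (y * a) * x := by rw [hx1]
    _ = y * (a * x) := by rw [mul_assoc]
  have key2 : y = y * (a * x) := by
    calc y = y * a * y := hy2.symm
    _ = y * (a * x * a) * y := by conv_lhs => rw [← hx1]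
    _ = y * ((a * x) * (a * y)) := by simp only [mul_assoc]
    _ = y * ((a * y) * (a * x)) := by rw [icomm (a * x) (a * y) hax hay]
    _ = (y * a * y) * (a * x) := by simp only [mul_assoc]
    _ = y * (a * x) := by rw [hy2]
  exact key1.trans key2.symm

private lemma sinv_eq {a x : S} (h1 : a * x * a = a) (h2 : x * a * x = x) : sinv a = x :=
  sinv_unique (msm a) (sms a) h1 h2

private lemma sinv_idem {e : S} (he : e * e = e) : sinv e = e :=
  sinv_eq (by rw [he, he]) (by rw [he, he])

private lemma sinv_mul_eq (a b : S) : sinv (a * b) = sinv b * sinv a := by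
  apply sinv_eq
  · calc (a * b) * (sinv b * sinv a) * (a * b)
        = a * (((b * sinv b) * (sinv a * a)) * b) := by simp only [mul_assoc]
    _ = a * (((sinv a * a) * (b * sinv b)) * b) := by
        rw [icomm (b * sinv b) (sinv a * a) (ms_idem b) (sm_idem a)]
    _ = (a * sinv a * a) * (b * sinv b * b) := by simp only [mul_assoc]
    _ = a * b := by rw [msm, msm]
  · calc (sinv b * sinv a) * (a * b) * (sinv b * sinv a)
        = sinv b * (((sinv a * a) * (b * sinv b)) * sinv a) := by simp only [mul_assoc]
    _ = sinv b * (((b * sinv b) * (sinv a * a)) * sinv a) := by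
        rw [icomm (sinv a * a) (b * sinv b) (sm_idem a) (ms_idem b)]
    _ = (sinv b * b * sinv b) * (sinv a * a * sinv a) := by simp only [mul_assoc]
    _ = sinv b * sinv a := by rw [sms, sms]

private lemma nle_refl (a : S) : nle a a :=
  ⟨a * sinv a, ms_idem a, (msm a).symm⟩

private lemma nle_trans {a b c : S} (h1 : nle a b) (h2 : nle b c) : nle a c := by
  obtain ⟨e, he, hab⟩ := h1
  obtain ⟨f, hf, hbc⟩ := h2
  exact ⟨e * f, idem_mul_idem he hf, by rw [hab, hbc, mul_assoc]⟩

private lemma nle_right {a b : S} (h : nle a b) : ∃ f : S, f * f = f ∧ a = b * f := by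
  obtain ⟨e, he, rfl⟩ := h
  have hbf : b * (sinv b * (e * b)) = e * b := by
    calc b * (sinv b * (e * b)) = ((b * sinv b) * e) * b := by simp only [mul_assoc]
    _ = (e * (b * sinv b)) * b := by rw [icomm (b * sinv b) e (ms_idem b) he]
    _ = e * (b * sinv b * b) := by simp only [mul_assoc]
    _ = e * b := by rw [msm]
  refine ⟨sinv b * (e * b), ?_, hbf.symm⟩
  calc (sinv b * (e * b)) * (sinv b * (e * b))
      = sinv b * (e * (b * (sinv b * (e * b)))) := by simp only [mul_assoc]
  _ = sinv b * (e * (e * b)) := by rw [hbf]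
  _ = sinv b * ((e * e) * b) := by simp only [mul_assoc]
  _ = sinv b * (e * b) := by rw [he]

private lemma nle_of_right {a b f : S} (hf : f * f = f) (h : a = b * f) : nle a b := by
  refine ⟨(b * f) * sinv b, ?_, ?_⟩
  · calc ((b * f) * sinv b) * ((b * f) * sinv b)
        = b * ((f * (sinv b * b)) * (f * sinv b)) := by simp only [mul_assoc]
    _ = b * (((sinv b * b) * f) * (f * sinv b)) := by rw [icomm f (sinv b * b) hf (sm_idem b)]
    _ = (b * sinv b * b) * ((f * f) * sinv b) := by simp only [mul_assoc]
    _ = (b * f) * sinv b := by rw [msm, hf, ← mul_assoc]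
  · rw [h]
    calc b * f = (b * sinv b * b) * f := by rw [msm]
    _ = b * ((sinv b * b) * f) := by simp only [mul_assoc]
    _ = b * (f * (sinv b * b)) := by rw [icomm (sinv b * b) f (sm_idem b) hf]
    _ = ((b * f) * sinv b) * b := by simp only [mul_assoc]

private lemma nle_mul_left {a b : S} (c : S) (h : nle a b) : nle (c * a) (c * b) := by
  obtain ⟨f, hf, hr⟩ := nle_right h
  exact nle_of_right hf (by rw [hr, mul_assoc])

private lemma nle_mul_right {a b : S} (c : S) (h : nle a b) : nle (a * c) (b * c) := by
  obtain ⟨e, he, hr⟩ := h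
  exact ⟨e, he, by rw [hr, mul_assoc]⟩

private lemma nle_sinv {a b : S} (h : nle a b) : nle (sinv a) (sinv b) := by
  obtain ⟨e, he, hr⟩ := h
  exact nle_of_right he (by rw [hr, sinv_mul_eq, sinv_idem he])

private lemma nle_antisymm {a b : S} (h1 : nle a b) (h2 : nle b a) : a = b := by
  obtain ⟨e, he, hab⟩ := h1
  obtain ⟨f, hf, hba⟩ := h2
  have hfe : b = (f * e) * b := by
    calc b = f * a := hba
    _ = f * (e * b) := by rw [hab]
    _ = (f * e) * b := by rw [mul_assoc]
  calc a = e * b := hab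
  _ = e * ((f * e) * b) := by rw [← hfe]
  _ = ((e * f) * e) * b := by simp only [mul_assoc]
  _ = ((f * e) * e) * b := by rw [icomm e f he hf]
  _ = (f * (e * e)) * b := by simp only [mul_assoc]
  _ = (f * e) * b := by rw [he]
  _ = b := hfe.symm

private lemma nle_idem_mul {e : S} (a : S) (he : e * e = e) : nle (e * a) a := ⟨e, he, rfl⟩

private lemma idem_nle_absorb {e f : S} (hf : f * f = f) (h : nle e f) : e * f = e := by
  obtain ⟨k, hk, rfl⟩ := h
  rw [mul_assoc, hf]

private lemma restrict {z c : S} (h : nle z c) : z = (z * sinv z) * c := by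
  obtain ⟨e, he, rfl⟩ := h
  rw [sinv_mul_eq, sinv_idem he]
  symm
  calc ((e * c) * (sinv c * e)) * c = (e * ((c * sinv c) * e)) * c := by simp only [mul_assoc]
  _ = (e * (e * (c * sinv c))) * c := by rw [icomm (c * sinv c) e (ms_idem c) he]
  _ = (e * e) * ((c * sinv c) * c) := by simp only [mul_assoc]
  _ = e * c := by rw [he, msm]

private lemma restrict_dom {z c : S} (h : nle z c) : (z * sinv z) * (c * sinv c) = z * sinv z :=
  idem_nle_absorb (ms_idem c)
    (nle_trans (nle_mul_right (sinv z) h) (nle_mul_left c (nle_sinv h)))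

end AuxInv

section AuxDist

variable {S : Type*} [DistributiveInverseSemigroup S]

private lemma zmul (a : S) : zero * a = zero := DistributiveInverseSemigroup.zero_mul a
private lemma mulz (a : S) : a * zero = zero := DistributiveInverseSemigroup.mul_zero a

private lemma sinv_zero : sinv (zero : S) = zero :=
  sinv_eq (by rw [zmul, zmul]) (by rw [zmul, zmul])

private lemma nle_zero_eq {a : S} (h : nle a zero) : a = zero := by
  obtain ⟨e, _, h⟩ := h
  rw [h, mulz]

private lemma nle_zero_any (a : S) : nle zero a := ⟨zero, zmul zero, (zmul a).symm⟩

private lemma compat_idem {e f : S} (he : e * e = e) (hf : f * f = f) : compat e f :=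
  ⟨by rw [sinv_idem he]; exact idem_mul_idem he hf,
   by rw [sinv_idem hf]; exact idem_mul_idem he hf⟩

private lemma compat_zero_left (x : S) : compat zero x := by
  constructor
  · simp only [sinv_zero, zmul]
  · simp only [zmul]

private lemma compat_zero_right (x : S) : compat x zero := by
  constructor
  · simp only [sinv_zero, mulz]
  · simp only [sinv_zero, mulz]

private lemma join_zero_left (x : S) : join zero x = x :=
  nle_antisymm
    (DistributiveInverseSemigroup.join_le zero x x (compat_zero_left x) (nle_zero_any x)
      (nle_refl x))
    (DistributiveInverseSemigroup.le_join_right zero x (compat_zero_left x))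

private lemma join_zero_right (x : S) : join x zero = x :=
  nle_antisymm
    (DistributiveInverseSemigroup.join_le x zero x (compat_zero_right x) (nle_refl x)
      (nle_zero_any x))
    (DistributiveInverseSemigroup.le_join_left x zero (compat_zero_right x))

end AuxDist

/-- In a Boolean inverse semigroup, a proper filter is prime iff it is an ultrafilter. -/
theorem stmt16 {S : Type*} [BooleanInverseSemigroup S] (A : Set S)
    (hA : IsProperFilter A) :
    IsPrimeFilter A ↔ IsUltraFilter A := by
  constructor
  · -- prime → ultra
    rintro ⟨hP, hprime⟩
    refine ⟨hP, ?_⟩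
    intro B hB hAB
    apply Set.Subset.antisymm hAB
    intro b hb
    obtain ⟨⟨hBne, hBdir, hBup⟩, hB0⟩ := hB
    obtain ⟨⟨hAne, hAdir, hAup⟩, hA0⟩ := hP
    obtain ⟨a0, ha0⟩ := hAne
    obtain ⟨z, hzB, hza, hzb⟩ := hBdir a0 (hAB ha0) b hb
    set e := z * sinv z with he_def
    set F := a0 * sinv a0 with hF_def
    set g := rdiff F e with hg_def
    clear_value g
    clear_value F
    clear_value e
    have he : e * e = e := by rw [he_def]; exact ms_idem z
    have hF : F * F = F := by rw [hF_def]; exact ms_idem a0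
    have hg : g * g = g := by rw [hg_def]; exact rdiff_idem F e hF he
    have heg : e * g = zero := by rw [hg_def]; exact rdiff_disj F e hF he
    have hze : z = e * a0 := by rw [he_def]; exact restrict hza
    have heF : e * F = e := by rw [he_def, hF_def]; exact restrict_dom hza
    have hFe : F * e = e := (icomm F e hF he).trans heF
    have hjoin_eg : join e g = F := by
      have h := rdiff_join F e hF he
      rwa [hFe, ← hg_def] at h
    have hFg : F * g = g :=
      (icomm g F hg hF).symm.trans
        (idem_nle_absorb hF (by rw [hg_def]; exact rdiff_le F e hF he))
    have hdecomp : a0 = join z (g * a0) := by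
      calc a0 = F * a0 := by rw [hF_def, msm]
      _ = join e g * a0 := by rw [hjoin_eg]
      _ = join (e * a0) (g * a0) :=
        DistributiveInverseSemigroup.join_mul e g a0 (compat_idem he hg)
      _ = join z (g * a0) := by rw [← hze]
    have hzw0 : sinv z * (g * a0) = zero := by
      calc sinv z * (g * a0) = (sinv a0 * e) * (g * a0) := by
            rw [hze, sinv_mul_eq, sinv_idem he]
      _ = sinv a0 * ((e * g) * a0) := by simp only [mul_assoc]
      _ = zero := by rw [heg, zmul, mulz]
    have hzw0' : z * sinv (g * a0) = zero := by
      calc z * sinv (g * a0) = (e * a0) * (sinv a0 * g) := by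
            rw [hze, sinv_mul_eq, sinv_idem hg]
      _ = e * ((a0 * sinv a0) * g) := by simp only [mul_assoc]
      _ = e * g := by rw [← hF_def, hFg]
      _ = zero := heg
    have hcompat : compat z (g * a0) := by
      constructor
      · rw [hzw0, zmul]
      · rw [hzw0', zmul]
    rcases hprime z (g * a0) hcompat (hdecomp ▸ ha0) with hzA | hw
    · exact hAup z hzA b hzb
    · obtain ⟨y, hyB, hyz, hyw⟩ := hBdir z hzB (g * a0) (hAB hw)
      have h1 : nle (sinv y * y) zero := by
        have h2 := nle_trans (nle_mul_right y (nle_sinv hyz)) (nle_mul_left (sinv z) hyw)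
        rwa [hzw0] at h2
      have hy0 : y = zero := by
        have h2 : sinv y * y = zero := nle_zero_eq h1
        calc y = y * sinv y * y := (msm y).symm
        _ = y * (sinv y * y) := by rw [mul_assoc]
        _ = zero := by rw [h2, mulz]
      exact absurd (hy0 ▸ hyB) hB0
  · -- ultra → prime
    rintro ⟨hP, hmax⟩
    refine ⟨hP, ?_⟩
    intro a b hab hjoin
    by_cases haA : a ∈ A
    · exact Or.inl haA
    right
    obtain ⟨⟨hAne, hAdir, hAup⟩, hA0⟩ := hP
    set c := join a b with hc_def
    set F := c * sinv c with hF_def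
    set E := a * sinv a with hE_def
    set g := rdiff F E with hg_def
    clear_value g
    clear_value E
    clear_value F
    clear_value c
    have hF : F * F = F := by rw [hF_def]; exact ms_idem c
    have hE : E * E = E := by rw [hE_def]; exact ms_idem a
    have hg : g * g = g := by rw [hg_def]; exact rdiff_idem F E hF hE
    have hEg : E * g = zero := by rw [hg_def]; exact rdiff_disj F E hF hE
    have hga : g * a = zero := by
      calc g * a = g * (E * a) := by rw [hE_def, msm]
      _ = (g * E) * a := (mul_assoc g E a).symm
      _ = (E * g) * a := by rw [icomm g E hg hE]
      _ = zero := by rw [hEg, zmul]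
    have ha_le : nle a c := by
      rw [hc_def]; exact DistributiveInverseSemigroup.le_join_left a b hab
    have haEc : a = E * c := by rw [hE_def]; exact restrict ha_le
    have hne : ∀ x ∈ A, g * x ≠ zero := by
      intro x hx h0
      obtain ⟨z, hzA, hzx, hzc⟩ := hAdir x hx c hjoin
      have hzh : z = (z * sinv z) * c := restrict hzc
      have hhF : (z * sinv z) * F = z * sinv z := by rw [hF_def]; exact restrict_dom hzc
      have hh : (z * sinv z) * (z * sinv z) = z * sinv z := ms_idem z
      have hgz : g * z = zero := nle_zero_eq (h0 ▸ nle_mul_left g hzx)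
      have hgh : g * (z * sinv z) = zero := by
        calc g * (z * sinv z) = g * ((z * sinv z) * F) := by rw [hhF]
        _ = g * ((z * sinv z) * (c * sinv c)) := by rw [hF_def]
        _ = (g * ((z * sinv z) * c)) * sinv c := by simp only [mul_assoc]
        _ = (g * z) * sinv c := by rw [← hzh]
        _ = zero := by rw [hgz, zmul]
      have hhg : (z * sinv z) * g = zero := (icomm (z * sinv z) g hh hg).trans hgh
      have hdec : join (F * E) g = F := by
        have h := rdiff_join F E hF hE
        rwa [← hg_def] at h
      have hhFE : z * sinv z = (z * sinv z) * (F * E) := by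
        calc z * sinv z = (z * sinv z) * F := hhF.symm
        _ = (z * sinv z) * join (F * E) g := by rw [hdec]
        _ = join ((z * sinv z) * (F * E)) ((z * sinv z) * g) :=
          DistributiveInverseSemigroup.mul_join (F * E) g (z * sinv z)
            (compat_idem (idem_mul_idem hF hE) hg)
        _ = join ((z * sinv z) * (F * E)) zero := by rw [hhg]
        _ = (z * sinv z) * (F * E) := join_zero_right _
      have hza2 : z = (z * sinv z) * a := by
        calc z = (z * sinv z) * c := hzh
        _ = ((z * sinv z) * (F * E)) * c := by rw [← hhFE]
        _ = ((z * sinv z) * (E * F)) * c := by rw [icomm F E hF hE]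
        _ = (z * sinv z) * (E * (F * c)) := by simp only [mul_assoc]
        _ = (z * sinv z) * (E * ((c * sinv c) * c)) := by rw [hF_def]
        _ = (z * sinv z) * (E * c) := by rw [msm]
        _ = (z * sinv z) * a := by rw [← haEc]
      have hzlea : nle z a := by rw [hza2]; exact nle_idem_mul a hh
      exact haA (hAup z hzA a hzlea)
    have hBfilter : IsProperFilter {t : S | ∃ x ∈ A, nle (g * x) t} := by
      refine ⟨⟨⟨g * c, ⟨c, hjoin, nle_refl _⟩⟩, ?_, ?_⟩, ?_⟩
      · rintro t1 ⟨x1, hx1, h1⟩ t2 ⟨x2, hx2, h2⟩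
        obtain ⟨z, hzA, hz1, hz2⟩ := hAdir x1 hx1 x2 hx2
        exact ⟨g * z, ⟨z, hzA, nle_refl _⟩, nle_trans (nle_mul_left g hz1) h1,
          nle_trans (nle_mul_left g hz2) h2⟩
      · rintro t ⟨x, hx, h1⟩ t' ht'
        exact ⟨x, hx, nle_trans h1 ht'⟩
      · rintro ⟨x, hx, h1⟩
        exact hne x hx (nle_zero_eq h1)
    have hsub : A ⊆ {t : S | ∃ x ∈ A, nle (g * x) t} := fun x hx => ⟨x, hx, nle_idem_mul x hg⟩
    have hABeq : A = {t : S | ∃ x ∈ A, nle (g * x) t} := hmax _ hBfilter hsub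
    have hgcA : g * c ∈ A := by
      rw [hABeq]
      exact ⟨c, hjoin, nle_refl _⟩
    have hgcb : g * c = g * b := by
      calc g * c = join (g * a) (g * b) := by
            rw [hc_def]; exact DistributiveInverseSemigroup.mul_join a b g hab
      _ = join zero (g * b) := by rw [hga]
      _ = g * b := join_zero_left _
    rw [hgcb] at hgcA
    exact hAup (g * b) hgcA b (nle_idem_mul b hg)
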